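/- arXiv:2603.16481 — 4 statements merged into one kernel-verified Lean document; each statement's English description precedes it below -/
import Mathlib

section
/- For every vector of noise parameters σ ∈ ℝ^{n_con} with σ_j > 0 for all j, and for every feasible parameter vector θ ∈ ℝ^r (i.e., ‖θ‖² ≤ Γ_f² and (y − Aᵀθ)ᵀ P_j (y − Aᵀθ) ≤ Γ_{w,j}² for all j = 1,…,n_con), the upper bound qᵀθ ≤ qᵀθ^μ_σ + β_σ · √(qᵀ S_σ⁻¹ q) holds, where θ^μ_σ = A K̂_σ⁻¹ y, S_σ = I_r + A P_σ Aᵀ, and β_σ = √(Γ_f² + Σ_{j=1}^{n_con} Γ_{w,j}²/σ_j² − yᵀ K̂_σ⁻¹ y). (Finite-dimensional form of Theorem 1, statement i): weak-duality validity of the Gaussian-process-type bound for every σ.) -/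
/-
Completing the square: with `μ = A K̂_σ⁻¹ y`, the push-through identity `S_σ A = A P_σ K̂_σ` gives
`θᵀθ + (y - Aᵀθ)ᵀ P_σ (y - Aᵀθ) = (θ - μ)ᵀ S_σ (θ - μ) + yᵀ K̂_σ⁻¹ y`.
For feasible `θ` the left side is at most `Γ_f² + ∑ j Γ_{w,j}² / σ_j²`, so the `S_σ`-norm of
`θ - μ` is at most `β_σ`, and Cauchy–Schwarz for the dual pair of norms `‖·‖_{S_σ}`,
`‖·‖_{S_σ⁻¹}` bounds `qᵀ(θ - μ)` by `β_σ √(qᵀ S_σ⁻¹ q)`.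
-/

open Matrix

/-- Aggregated noise-shape matrix `P_σ := ∑ j σ_j⁻² P_j`. -/
noncomputable def Pagg {N n_con : ℕ} (P : Fin n_con → Matrix (Fin N) (Fin N) ℝ)
    (σ : Fin n_con → ℝ) : Matrix (Fin N) (Fin N) ℝ :=
  ∑ j, ((σ j) ^ 2)⁻¹ • P j

/-- Gram matrix `K̂_σ := AᵀA + P_σ⁻¹`. -/
noncomputable def Khat {r N n_con : ℕ} (A : Matrix (Fin r) (Fin N) ℝ)
    (P : Fin n_con → Matrix (Fin N) (Fin N) ℝ) (σ : Fin n_con → ℝ) :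
    Matrix (Fin N) (Fin N) ℝ :=
  Aᵀ * A + (Pagg P σ)⁻¹

/-- Posterior-mean coefficient vector `θ^μ_σ := A K̂_σ⁻¹ y`. -/
noncomputable def θmean {r N n_con : ℕ} (A : Matrix (Fin r) (Fin N) ℝ) (y : Fin N → ℝ)
    (P : Fin n_con → Matrix (Fin N) (Fin N) ℝ) (σ : Fin n_con → ℝ) : Fin r → ℝ :=
  A *ᵥ ((Khat A P σ)⁻¹ *ᵥ y)

/-- Shape matrix `S_σ := I_r + A P_σ Aᵀ`. -/
noncomputable def Smat {r N n_con : ℕ} (A : Matrix (Fin r) (Fin N) ℝ)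
    (P : Fin n_con → Matrix (Fin N) (Fin N) ℝ) (σ : Fin n_con → ℝ) :
    Matrix (Fin r) (Fin r) ℝ :=
  1 + A * Pagg P σ * Aᵀ

/-- Scaling factor `β_σ := √(Γ_f² + ∑ j Γ_{w,j}²/σ_j² − yᵀ K̂_σ⁻¹ y)`. -/
noncomputable def βfac {r N n_con : ℕ} (A : Matrix (Fin r) (Fin N) ℝ) (y : Fin N → ℝ)
    (Γf : ℝ) (Γw : Fin n_con → ℝ) (P : Fin n_con → Matrix (Fin N) (Fin N) ℝ)
    (σ : Fin n_con → ℝ) : ℝ :=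
  Real.sqrt (Γf ^ 2 + ∑ j, (Γw j) ^ 2 / (σ j) ^ 2 - y ⬝ᵥ ((Khat A P σ)⁻¹ *ᵥ y))

namespace Matrix

variable {ι m n : Type*} [Fintype ι] [Fintype m] [Fintype n]

theorem dotProduct_sum_smul_mulVec (c : ι → ℝ) (P : ι → Matrix n n ℝ) (x y : n → ℝ) :
    x ⬝ᵥ (∑ j, c j • P j) *ᵥ y = ∑ j, c j * (x ⬝ᵥ P j *ᵥ y) := by
  simp only [sum_mulVec, dotProduct_sum, smul_mulVec, dotProduct_smul, smul_eq_mul]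

theorem posDef_sum_smul {c : ι → ℝ} {P : ι → Matrix n n ℝ} (hc : ∀ j, 0 < c j)
    (hP : ∀ j, (P j).PosSemidef) (hsum : (∑ j, P j).PosDef) : (∑ j, c j • P j).PosDef := by
  refine PosDef.of_dotProduct_mulVec_pos
    (isSelfAdjoint_sum _ fun j _ => (hP j).isHermitian.smul (.all (c j))) fun x hx => ?_
  have hnonneg : ∀ j, 0 ≤ x ⬝ᵥ P j *ᵥ x := fun j => by
    simpa using (hP j).dotProduct_mulVec_nonneg x
  obtain ⟨j, -, hj⟩ := Finset.exists_lt_of_sum_lt (s := Finset.univ) (f := fun _ => (0 : ℝ))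
    (g := fun j => x ⬝ᵥ P j *ᵥ x)
    (by simpa [sum_mulVec, dotProduct_sum] using hsum.dotProduct_mulVec_pos hx)
  rw [star_trivial, dotProduct_sum_smul_mulVec]
  exact Finset.sum_pos' (fun j _ => mul_nonneg (hc j).le (hnonneg j))
    ⟨j, Finset.mem_univ j, mul_pos (hc j) hj⟩

theorem PosSemidef.dotProduct_mulVec_sq_le {S : Matrix n n ℝ} (hS : S.PosSemidef) (x y : n → ℝ) :
    (x ⬝ᵥ S *ᵥ y) ^ 2 ≤ (x ⬝ᵥ S *ᵥ x) * (y ⬝ᵥ S *ᵥ y) := by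
  have hsymm : y ⬝ᵥ S *ᵥ x = x ⬝ᵥ S *ᵥ y := by
    rw [← dotProduct_transpose_mulVec, ← conjTranspose_eq_transpose_of_trivial, hS.isHermitian.eq]
  have hdisc := discrim_le_zero (a := y ⬝ᵥ S *ᵥ y) (b := 2 * (x ⬝ᵥ S *ᵥ y)) (c := x ⬝ᵥ S *ᵥ x)
    fun t => by
      have := hS.dotProduct_mulVec_nonneg (x + t • y)
      simp only [star_trivial, mulVec_add, mulVec_smul, dotProduct_add, add_dotProduct,
        dotProduct_smul, smul_dotProduct, smul_eq_mul, hsymm] at this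
      linarith
  rw [discrim] at hdisc
  linarith

theorem PosDef.dotProduct_le_sqrt_mul_sqrt [DecidableEq n] {S : Matrix n n ℝ} (hS : S.PosDef)
    (q u : n → ℝ) :
    q ⬝ᵥ u ≤ √(u ⬝ᵥ S *ᵥ u) * √(q ⬝ᵥ S⁻¹ *ᵥ q) := by
  have hSS : S * S⁻¹ = 1 := mul_nonsing_inv S hS.det_pos.ne'.isUnit
  have hcs := hS.posSemidef.dotProduct_mulVec_sq_le u (S⁻¹ *ᵥ q)
  rw [mulVec_mulVec, hSS, one_mulVec, dotProduct_comm (S⁻¹ *ᵥ q)] at hcs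
  rw [← Real.sqrt_mul (by simpa using hS.posSemidef.dotProduct_mulVec_nonneg u), dotProduct_comm]
  exact (le_abs_self _).trans (Real.abs_le_sqrt hcs)


section PosteriorMean

variable [DecidableEq n] (A : Matrix m n ℝ) {P : Matrix n n ℝ} (y : n → ℝ)

theorem one_add_mul_mul_transpose_mul [DecidableEq m] (hP : IsUnit P.det) :
    (1 + A * P * Aᵀ) * A = A * P * (Aᵀ * A + P⁻¹) := by
  rw [Matrix.add_mul, Matrix.one_mul, Matrix.mul_add, Matrix.mul_assoc A P P⁻¹,
    mul_nonsing_inv P hP, Matrix.mul_one, add_comm]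
  simp only [Matrix.mul_assoc]

theorem one_add_mul_mul_transpose_mulVec_mean [DecidableEq m] (hP : IsUnit P.det)
    (hK : IsUnit (Aᵀ * A + P⁻¹).det) :
    (1 + A * P * Aᵀ) *ᵥ (A *ᵥ ((Aᵀ * A + P⁻¹)⁻¹ *ᵥ y)) = A *ᵥ (P *ᵥ y) := by
  rw [mulVec_mulVec, mulVec_mulVec, one_add_mul_mul_transpose_mul A hP, Matrix.mul_assoc,
    mul_nonsing_inv _ hK, Matrix.mul_one, mulVec_mulVec]

theorem transpose_mulVec_mean (hK : IsUnit (Aᵀ * A + P⁻¹).det) :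
    Aᵀ *ᵥ (A *ᵥ ((Aᵀ * A + P⁻¹)⁻¹ *ᵥ y)) = y - P⁻¹ *ᵥ ((Aᵀ * A + P⁻¹)⁻¹ *ᵥ y) := by
  rw [mulVec_mulVec, eq_sub_iff_add_eq, ← add_mulVec, mulVec_mulVec,
    mul_nonsing_inv _ hK, one_mulVec]

theorem sub_mean_dotProduct_mulVec_sub_mean [DecidableEq m] (hPs : P.IsSymm) (hP : IsUnit P.det)
    (hK : IsUnit (Aᵀ * A + P⁻¹).det) (θ : m → ℝ) :
    let μ := A *ᵥ ((Aᵀ * A + P⁻¹)⁻¹ *ᵥ y)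
    (θ - μ) ⬝ᵥ (1 + A * P * Aᵀ) *ᵥ (θ - μ) =
      θ ⬝ᵥ θ + (y - Aᵀ *ᵥ θ) ⬝ᵥ P *ᵥ (y - Aᵀ *ᵥ θ) - y ⬝ᵥ (Aᵀ * A + P⁻¹)⁻¹ *ᵥ y := by
  intro μ
  set S := 1 + A * P * Aᵀ
  set z := Aᵀ *ᵥ θ
  have hSsymm : S.IsSymm :=
    isSymm_one.add (by simp [IsSymm, Matrix.transpose_mul, hPs.eq, Matrix.mul_assoc])
  have hSμ : S *ᵥ μ = A *ᵥ (P *ᵥ y) := one_add_mul_mul_transpose_mulVec_mean A y hP hK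
  have hθθ : θ ⬝ᵥ S *ᵥ θ = θ ⬝ᵥ θ + z ⬝ᵥ P *ᵥ z := by
    rw [add_mulVec, one_mulVec, dotProduct_add, ← mulVec_mulVec, ← mulVec_mulVec,
      dotProduct_mulVec θ A, ← mulVec_transpose]
  have hθμ : θ ⬝ᵥ S *ᵥ μ = z ⬝ᵥ P *ᵥ y := by
    rw [hSμ, dotProduct_mulVec, ← mulVec_transpose]
  have hPinv : ∀ v, (P⁻¹ *ᵥ v) ⬝ᵥ P *ᵥ y = v ⬝ᵥ y := fun v => by
    rw [dotProduct_mulVec (P⁻¹ *ᵥ v), ← mulVec_transpose, hPs.eq, mulVec_mulVec,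
      mul_nonsing_inv P hP, one_mulVec]
  have hμμ : μ ⬝ᵥ S *ᵥ μ = y ⬝ᵥ P *ᵥ y - y ⬝ᵥ (Aᵀ * A + P⁻¹)⁻¹ *ᵥ y := by
    rw [hSμ, dotProduct_mulVec μ A, ← mulVec_transpose, transpose_mulVec_mean A y hK,
      sub_dotProduct, hPinv, dotProduct_comm _ y]
  have hμθ : μ ⬝ᵥ S *ᵥ θ = θ ⬝ᵥ S *ᵥ μ := by
    rw [← dotProduct_transpose_mulVec, hSsymm.eq]
  have hyz : y ⬝ᵥ P *ᵥ z = z ⬝ᵥ P *ᵥ y := by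
    rw [← dotProduct_transpose_mulVec, hPs.eq]
  simp only [mulVec_sub, dotProduct_sub, sub_dotProduct, hθθ, hθμ, hμθ, hμμ, hyz]
  ring

end PosteriorMean

end Matrix

theorem weak_duality_bound_general
    (r N n_con : ℕ)
    (A : Matrix (Fin r) (Fin N) ℝ) (y : Fin N → ℝ) (q : Fin r → ℝ)
    (Γf : ℝ)
    (Γw : Fin n_con → ℝ)
    (P : Fin n_con → Matrix (Fin N) (Fin N) ℝ)
    (hP : ∀ j, (P j).PosSemidef)
    (hPsum : (∑ j, P j).PosDef)
    (σ : Fin n_con → ℝ) (hσ : ∀ j, 0 < σ j)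
    (θ : Fin r → ℝ)
    (hθf : θ ⬝ᵥ θ ≤ Γf ^ 2)
    (hθw : ∀ j, (y - Aᵀ *ᵥ θ) ⬝ᵥ (P j *ᵥ (y - Aᵀ *ᵥ θ)) ≤ (Γw j) ^ 2) :
    q ⬝ᵥ θ ≤ q ⬝ᵥ θmean A y P σ
      + βfac A y Γf Γw P σ * Real.sqrt (q ⬝ᵥ ((Smat A P σ)⁻¹ *ᵥ q)) := by
  have hPσ : (Pagg P σ).PosDef := posDef_sum_smul (fun j => inv_pos.2 (pow_pos (hσ j) 2)) hP hPsum
  have hK : (Khat A P σ).PosDef := by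
    refine PosDef.posSemidef_add ?_ hPσ.inv
    simpa using posSemidef_conjTranspose_mul_self A
  have hS : (Smat A P σ).PosDef := by
    refine PosDef.one.add_posSemidef ?_
    simpa using hPσ.posSemidef.mul_mul_conjTranspose_same A
  have hnoise : (y - Aᵀ *ᵥ θ) ⬝ᵥ Pagg P σ *ᵥ (y - Aᵀ *ᵥ θ) ≤ ∑ j, Γw j ^ 2 / σ j ^ 2 := by
    rw [Pagg, dotProduct_sum_smul_mulVec]
    gcongr with j
    rw [inv_mul_eq_div]
    gcongr
    exact hθw j
  have hresidual : (θ - θmean A y P σ) ⬝ᵥ Smat A P σ *ᵥ (θ - θmean A y P σ) =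
      θ ⬝ᵥ θ + (y - Aᵀ *ᵥ θ) ⬝ᵥ Pagg P σ *ᵥ (y - Aᵀ *ᵥ θ) - y ⬝ᵥ (Khat A P σ)⁻¹ *ᵥ y :=
    sub_mean_dotProduct_mulVec_sub_mean A y (by simpa using hPσ.isHermitian) hPσ.det_pos.ne'.isUnit
      hK.det_pos.ne'.isUnit θ
  have hβ : √((θ - θmean A y P σ) ⬝ᵥ Smat A P σ *ᵥ (θ - θmean A y P σ)) ≤ βfac A y Γf Γw P σ :=
    Real.sqrt_le_sqrt (by rw [hresidual]; linarith)
  calc q ⬝ᵥ θ = q ⬝ᵥ θmean A y P σ + q ⬝ᵥ (θ - θmean A y P σ) := by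
        rw [dotProduct_sub]; ring
    _ ≤ q ⬝ᵥ θmean A y P σ + βfac A y Γf Γw P σ * √(q ⬝ᵥ (Smat A P σ)⁻¹ *ᵥ q) := by
        gcongr
        exact (hS.dotProduct_le_sqrt_mul_sqrt q _).trans
          (mul_le_mul_of_nonneg_right hβ (Real.sqrt_nonneg _))

/-- Theorem 1, statement i) (finite-dimensional form): for every positive noise-parameter
vector `σ` and every feasible `θ`, the GP-type dual bound is a valid upper bound on `qᵀθ`. -/
theorem weak_duality_bound
    (r N n_con : ℕ) (hn : 1 ≤ n_con)
    (A : Matrix (Fin r) (Fin N) ℝ) (y : Fin N → ℝ) (q : Fin r → ℝ)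
    (Γf : ℝ) (hΓf : 0 < Γf)
    (Γw : Fin n_con → ℝ) (hΓw : ∀ j, 0 < Γw j)
    (P : Fin n_con → Matrix (Fin N) (Fin N) ℝ)
    (hP : ∀ j, (P j).PosSemidef)
    (hPsum : (∑ j, P j).PosDef)
    (σ : Fin n_con → ℝ) (hσ : ∀ j, 0 < σ j)
    (θ : Fin r → ℝ)
    (hθf : θ ⬝ᵥ θ ≤ Γf ^ 2)
    (hθw : ∀ j, (y - Aᵀ *ᵥ θ) ⬝ᵥ (P j *ᵥ (y - Aᵀ *ᵥ θ)) ≤ (Γw j) ^ 2) :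
    q ⬝ᵥ θ ≤ q ⬝ᵥ θmean A y P σ
      + βfac A y Γf Γw P σ * Real.sqrt (q ⬝ᵥ ((Smat A P σ)⁻¹ *ᵥ q)) :=
  weak_duality_bound_general r N n_con A y q Γf Γw P hP hPsum σ hσ θ hθf hθw
end

section
/- Closed-form solution of the relaxed single-constraint problem (equation (24) of the paper): let P ∈ ℝ^{N×N} be positive definite, A ∈ ℝ^{r×N}, y ∈ ℝ^N, q ∈ ℝ^r with q ≠ 0, and Γ > 0 with Γ² ≥ yᵀ K̂⁻¹ y, where K̂ := AᵀA + P⁻¹, θ^μ := A K̂⁻¹ y, S := I_r + A P Aᵀ. Then the value qᵀθ^μ + √(Γ² − yᵀ K̂⁻¹ y) · √(qᵀ S⁻¹ q) is the greatest element (IsGreatest, i.e., maximum attained) of the set { qᵀθ : θ ∈ ℝ^r, ‖θ‖² + (y − Aᵀθ)ᵀ P (y − Aᵀθ) ≤ Γ² }, attained at θ* := θ^μ + (√(Γ² − yᵀ K̂⁻¹ y)/√(qᵀ S⁻¹ q)) · S⁻¹ q. -/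
/-!
Completing the square turns the constraint into the ellipsoid
`(θ - θ^μ)ᵀ S (θ - θ^μ) ≤ Γ² - yᵀ K̂⁻¹ y`; the push-through identity `S A = A P K̂` is what makes
`θ^μ` the centre and `yᵀ K̂⁻¹ y` the offset. On an ellipsoid `uᵀ S u ≤ ρ²` the linear form
`qᵀ u = (S⁻¹ q)ᵀ S u` is bounded by `ρ √(qᵀ S⁻¹ q)` by Cauchy–Schwarz for the inner product
defined by `S`, with equality at the multiple of `S⁻¹ q` that lies on the boundary.
-/

open Matrix

theorem Matrix.PosSemidef.isSymm {n : Type*} {M : Matrix n n ℝ} (hM : M.PosSemidef) :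
    M.IsSymm :=
  (conjTranspose_eq_transpose_of_trivial M).symm.trans hM.isHermitian.eq

section SymmetricForm

variable {n : Type*} [Fintype n] {M : Matrix n n ℝ}

theorem Matrix.IsSymm.dotProduct_mulVec_comm (hM : M.IsSymm) (x y : n → ℝ) :
    x ⬝ᵥ (M *ᵥ y) = y ⬝ᵥ (M *ᵥ x) := by
  simpa only [hM.eq] using dotProduct_transpose_mulVec M x y

theorem Matrix.IsSymm.sub_dotProduct_mulVec_sub (hM : M.IsSymm) (x z : n → ℝ) :
    (x - z) ⬝ᵥ (M *ᵥ (x - z)) = x ⬝ᵥ (M *ᵥ x) - 2 * x ⬝ᵥ (M *ᵥ z) + z ⬝ᵥ (M *ᵥ z) := by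
  simp only [mulVec_sub, dotProduct_sub, sub_dotProduct, hM.dotProduct_mulVec_comm z x]
  ring

theorem Matrix.PosSemidef.dotProduct_mulVec_sq_le_s10 (hM : M.PosSemidef) (x y : n → ℝ) :
    (x ⬝ᵥ (M *ᵥ y)) ^ 2 ≤ (x ⬝ᵥ (M *ᵥ x)) * (y ⬝ᵥ (M *ᵥ y)) := by
  let := M.toSeminormedAddCommGroup hM
  let := M.toInnerProductSpace hM
  have inner_eq (u v : n → ℝ) : inner ℝ u v = u ⬝ᵥ (M *ᵥ v) := dotProduct_comm _ _
  simpa only [inner_eq, sq] using real_inner_mul_inner_self_le x y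

end SymmetricForm

section CompletingTheSquare

variable {m n : Type*} [Fintype m] [Fintype n] [DecidableEq m] [DecidableEq n]
  {P : Matrix n n ℝ} (A : Matrix m n ℝ)

theorem one_add_mul_mul_transpose_mul_eq (hP : IsUnit P.det) :
    (1 + A * P * Aᵀ) * A = A * P * (Aᵀ * A + P⁻¹) := by
  rw [Matrix.add_mul, Matrix.one_mul, Matrix.mul_add, mul_nonsing_inv_cancel_right _ _ hP,
    Matrix.mul_assoc _ Aᵀ A, add_comm]

omit [DecidableEq m] in
theorem mul_transpose_mul_mul_inv_eq (hP : IsUnit P.det) (hK : IsUnit (Aᵀ * A + P⁻¹).det) :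
    P * Aᵀ * A * (Aᵀ * A + P⁻¹)⁻¹ = P - (Aᵀ * A + P⁻¹)⁻¹ := by
  have hPK : P * Aᵀ * A = P * (Aᵀ * A + P⁻¹) - 1 := by
    rw [Matrix.mul_add, mul_nonsing_inv _ hP, add_sub_cancel_right, Matrix.mul_assoc]
  rw [hPK, Matrix.sub_mul, mul_nonsing_inv_cancel_right _ _ hK, Matrix.one_mul]

omit [Fintype m] [DecidableEq n] in
theorem Matrix.IsSymm.one_add_mul_mul_transpose (hP : P.IsSymm) : (1 + A * P * Aᵀ).IsSymm := by
  simp only [IsSymm, transpose_add, transpose_one, transpose_mul, transpose_transpose, hP.eq,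
    Matrix.mul_assoc]

theorem dotProduct_add_quadForm_eq_completedSquare (hPs : P.IsSymm) (hP : IsUnit P.det)
    (hK : IsUnit (Aᵀ * A + P⁻¹).det) (y : n → ℝ) (θ : m → ℝ) :
    θ ⬝ᵥ θ + (y - Aᵀ *ᵥ θ) ⬝ᵥ (P *ᵥ (y - Aᵀ *ᵥ θ)) =
      (θ - A *ᵥ ((Aᵀ * A + P⁻¹)⁻¹ *ᵥ y)) ⬝ᵥ
          ((1 + A * P * Aᵀ) *ᵥ (θ - A *ᵥ ((Aᵀ * A + P⁻¹)⁻¹ *ᵥ y))) +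
        y ⬝ᵥ ((Aᵀ * A + P⁻¹)⁻¹ *ᵥ y) := by
  set K := Aᵀ * A + P⁻¹
  set S := 1 + A * P * Aᵀ
  set c := A *ᵥ (K⁻¹ *ᵥ y)
  have hSs : S.IsSymm := hPs.one_add_mul_mul_transpose A
  have hSc : S *ᵥ c = A *ᵥ (P *ᵥ y) := by
    rw [mulVec_mulVec, mulVec_mulVec, one_add_mul_mul_transpose_mul_eq A hP,
      mul_nonsing_inv_cancel_right _ _ hK, mulVec_mulVec]
  have hcSc : c ⬝ᵥ (S *ᵥ c) = y ⬝ᵥ (P *ᵥ y) - y ⬝ᵥ (K⁻¹ *ᵥ y) := by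
    rw [hSc, ← dotProduct_transpose_mulVec, dotProduct_comm, hPs.dotProduct_mulVec_comm,
      mulVec_mulVec, mulVec_mulVec, mulVec_mulVec, mul_transpose_mul_mul_inv_eq A hP hK,
      sub_mulVec, dotProduct_sub]
  have hθSθ : θ ⬝ᵥ (S *ᵥ θ) = θ ⬝ᵥ θ + (Aᵀ *ᵥ θ) ⬝ᵥ (P *ᵥ (Aᵀ *ᵥ θ)) := by
    rw [add_mulVec, one_mulVec, dotProduct_add, dotProduct_comm (Aᵀ *ᵥ θ),
      dotProduct_transpose_mulVec, mulVec_mulVec, mulVec_mulVec]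
  have hcross : (Aᵀ *ᵥ θ) ⬝ᵥ (P *ᵥ y) = θ ⬝ᵥ (A *ᵥ (P *ᵥ y)) := by
    rw [dotProduct_comm, dotProduct_transpose_mulVec]
  rw [hPs.sub_dotProduct_mulVec_sub, hSs.sub_dotProduct_mulVec_sub, hθSθ, hcSc, hSc,
    hPs.dotProduct_mulVec_comm y (Aᵀ *ᵥ θ), hcross]
  ring

end CompletingTheSquare

section Ellipsoid

variable {n : Type*} [Fintype n] [DecidableEq n] {S : Matrix n n ℝ}

/-- For `q ≠ 0` this is the point of the ellipsoid `uᵀ S u ≤ ρ²` maximising `qᵀ u`; for `q = 0`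
the division by `0` makes it `0`, which still maximises. -/
noncomputable def ellipsoidArgmax (S : Matrix n n ℝ) (q : n → ℝ) (ρ : ℝ) : n → ℝ :=
  (ρ / √(q ⬝ᵥ (S⁻¹ *ᵥ q))) • (S⁻¹ *ᵥ q)

theorem dotProduct_ellipsoidArgmax (q : n → ℝ) (ρ : ℝ) :
    q ⬝ᵥ ellipsoidArgmax S q ρ = ρ * √(q ⬝ᵥ (S⁻¹ *ᵥ q)) := by
  rw [ellipsoidArgmax, dotProduct_smul, smul_eq_mul, div_mul_eq_mul_div, mul_div_assoc,
    Real.div_sqrt]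

theorem Matrix.PosDef.mulVec_inv_mulVec (hS : S.PosDef) (q : n → ℝ) : S *ᵥ (S⁻¹ *ᵥ q) = q := by
  rw [mulVec_mulVec, mul_nonsing_inv _ hS.det_pos.ne'.isUnit, one_mulVec]

theorem ellipsoidArgmax_quadForm_le (hS : S.PosDef) (q : n → ℝ) (ρ : ℝ) :
    ellipsoidArgmax S q ρ ⬝ᵥ (S *ᵥ ellipsoidArgmax S q ρ) ≤ ρ ^ 2 := by
  set a := q ⬝ᵥ (S⁻¹ *ᵥ q)
  have ha : 0 ≤ a := by simpa using hS.inv.posSemidef.dotProduct_mulVec_nonneg q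
  have hquad : ellipsoidArgmax S q ρ ⬝ᵥ (S *ᵥ ellipsoidArgmax S q ρ) = ρ ^ 2 / a * a := by
    rw [ellipsoidArgmax, mulVec_smul, hS.mulVec_inv_mulVec, smul_dotProduct, dotProduct_smul,
      smul_eq_mul, smul_eq_mul, dotProduct_comm _ q, ← mul_assoc, ← sq, div_pow, Real.sq_sqrt ha]
  rcases ha.eq_or_lt with ha0 | hapos
  · rw [hquad, ← ha0, mul_zero]
    positivity
  · rw [hquad, div_mul_cancel₀ _ hapos.ne']

theorem dotProduct_le_of_quadForm_le (hS : S.PosDef) (q : n → ℝ) {ρ : ℝ} (hρ : 0 ≤ ρ)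
    {u : n → ℝ} (hu : u ⬝ᵥ (S *ᵥ u) ≤ ρ ^ 2) :
    q ⬝ᵥ u ≤ ρ * √(q ⬝ᵥ (S⁻¹ *ᵥ q)) := by
  set w := S⁻¹ *ᵥ q
  have ha : 0 ≤ q ⬝ᵥ w := by simpa using hS.inv.posSemidef.dotProduct_mulVec_nonneg q
  have hqu : q ⬝ᵥ u = w ⬝ᵥ (S *ᵥ u) := by
    rw [← hS.mulVec_inv_mulVec q, dotProduct_comm, hS.posSemidef.isSymm.dotProduct_mulVec_comm]
  have hwSw : w ⬝ᵥ (S *ᵥ w) = q ⬝ᵥ w := by rw [hS.mulVec_inv_mulVec, dotProduct_comm]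
  have hsq : (q ⬝ᵥ u) ^ 2 ≤ (ρ * √(q ⬝ᵥ w)) ^ 2 := by
    rw [mul_pow, Real.sq_sqrt ha, hqu]
    calc (w ⬝ᵥ (S *ᵥ u)) ^ 2 ≤ (w ⬝ᵥ (S *ᵥ w)) * (u ⬝ᵥ (S *ᵥ u)) :=
          hS.posSemidef.dotProduct_mulVec_sq_le_s10 w u
      _ ≤ (q ⬝ᵥ w) * ρ ^ 2 := by rw [hwSw]; exact mul_le_mul_of_nonneg_left hu ha
      _ = ρ ^ 2 * (q ⬝ᵥ w) := mul_comm _ _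
  exact le_of_sq_le_sq hsq (by positivity)

theorem isGreatest_dotProduct_ellipsoid (hS : S.PosDef) (c q : n → ℝ) {ρ : ℝ} (hρ : 0 ≤ ρ) :
    IsGreatest {v | ∃ θ, (θ - c) ⬝ᵥ (S *ᵥ (θ - c)) ≤ ρ ^ 2 ∧ v = q ⬝ᵥ θ}
      (q ⬝ᵥ c + ρ * √(q ⬝ᵥ (S⁻¹ *ᵥ q))) := by
  refine ⟨⟨c + ellipsoidArgmax S q ρ, ?_, ?_⟩, ?_⟩
  · simpa using ellipsoidArgmax_quadForm_le hS q ρ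
  · rw [dotProduct_add, dotProduct_ellipsoidArgmax]
  · rintro _ ⟨θ, hθ, rfl⟩
    have := dotProduct_le_of_quadForm_le hS q hρ hθ
    rw [dotProduct_sub] at this
    linarith

end Ellipsoid

theorem relaxed_problem_closed_form_general
    (r N : ℕ)
    (P : Matrix (Fin N) (Fin N) ℝ) (hP : P.PosDef)
    (A : Matrix (Fin r) (Fin N) ℝ) (y : Fin N → ℝ)
    (q : Fin r → ℝ)
    (Γ : ℝ)
    (Khat : Matrix (Fin N) (Fin N) ℝ) (hKhat : Khat = Aᵀ * A + P⁻¹)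
    (θμ : Fin r → ℝ) (hθμ : θμ = A *ᵥ (Khat⁻¹ *ᵥ y))
    (S : Matrix (Fin r) (Fin r) ℝ) (hS : S = 1 + A * P * Aᵀ)
    (hΓy : y ⬝ᵥ (Khat⁻¹ *ᵥ y) ≤ Γ ^ 2) :
    IsGreatest
      {v : ℝ | ∃ θ : Fin r → ℝ,
        θ ⬝ᵥ θ + (y - Aᵀ *ᵥ θ) ⬝ᵥ (P *ᵥ (y - Aᵀ *ᵥ θ)) ≤ Γ ^ 2 ∧ v = q ⬝ᵥ θ}
      (q ⬝ᵥ θμ + Real.sqrt (Γ ^ 2 - y ⬝ᵥ (Khat⁻¹ *ᵥ y)) * Real.sqrt (q ⬝ᵥ (S⁻¹ *ᵥ q)))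
    ∧
    (let θstar := θμ + (Real.sqrt (Γ ^ 2 - y ⬝ᵥ (Khat⁻¹ *ᵥ y))
        / Real.sqrt (q ⬝ᵥ (S⁻¹ *ᵥ q))) • (S⁻¹ *ᵥ q);
      θstar ⬝ᵥ θstar + (y - Aᵀ *ᵥ θstar) ⬝ᵥ (P *ᵥ (y - Aᵀ *ᵥ θstar)) ≤ Γ ^ 2 ∧
      q ⬝ᵥ θstar
        = q ⬝ᵥ θμ + Real.sqrt (Γ ^ 2 - y ⬝ᵥ (Khat⁻¹ *ᵥ y)) * Real.sqrt (q ⬝ᵥ (S⁻¹ *ᵥ q))) := by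
  subst hKhat hθμ hS
  have hK : (Aᵀ * A + P⁻¹).PosDef := by
    simpa [conjTranspose_eq_transpose_of_trivial] using
      PosDef.posSemidef_add (posSemidef_conjTranspose_mul_self A) hP.inv
  have hSpd : (1 + A * P * Aᵀ).PosDef := by
    simpa [conjTranspose_eq_transpose_of_trivial] using
      PosDef.one.add_posSemidef (hP.posSemidef.mul_mul_conjTranspose_same A)
  have hsquare := dotProduct_add_quadForm_eq_completedSquare A hP.posSemidef.isSymm
    hP.det_pos.ne'.isUnit hK.det_pos.ne'.isUnit y
  set ρ := √(Γ ^ 2 - y ⬝ᵥ ((Aᵀ * A + P⁻¹)⁻¹ *ᵥ y))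
  have hρ : Γ ^ 2 - y ⬝ᵥ ((Aᵀ * A + P⁻¹)⁻¹ *ᵥ y) = ρ ^ 2 :=
    (Real.sq_sqrt (sub_nonneg.2 hΓy)).symm
  refine ⟨?_, ?_, ?_⟩
  · simp_rw [hsquare, ← le_sub_iff_add_le, hρ]
    exact isGreatest_dotProduct_ellipsoid hSpd _ q (Real.sqrt_nonneg _)
  · rw [hsquare, add_sub_cancel_left, ← le_sub_iff_add_le, hρ]
    exact ellipsoidArgmax_quadForm_le hSpd q ρ
  · rw [dotProduct_add]
    exact congrArg _ (dotProduct_ellipsoidArgmax q ρ)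

/-- Closed-form solution of the relaxed single-constraint problem (equation (24)): the value
`qᵀθ^μ + √(Γ² − yᵀK̂⁻¹y) √(qᵀS⁻¹q)` is the maximum (greatest, attained) of `qᵀθ` over the
aggregated ellipsoidal constraint set, attained at
`θ* = θ^μ + (√(Γ² − yᵀK̂⁻¹y)/√(qᵀS⁻¹q)) S⁻¹ q`. -/
theorem relaxed_problem_closed_form
    (r N : ℕ)
    (P : Matrix (Fin N) (Fin N) ℝ) (hP : P.PosDef)
    (A : Matrix (Fin r) (Fin N) ℝ) (y : Fin N → ℝ)
    (q : Fin r → ℝ) (hq : q ≠ 0)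
    (Γ : ℝ) (hΓ : 0 < Γ)
    (Khat : Matrix (Fin N) (Fin N) ℝ) (hKhat : Khat = Aᵀ * A + P⁻¹)
    (θμ : Fin r → ℝ) (hθμ : θμ = A *ᵥ (Khat⁻¹ *ᵥ y))
    (S : Matrix (Fin r) (Fin r) ℝ) (hS : S = 1 + A * P * Aᵀ)
    (hΓy : y ⬝ᵥ (Khat⁻¹ *ᵥ y) ≤ Γ ^ 2) :
    IsGreatest
      {v : ℝ | ∃ θ : Fin r → ℝ,
        θ ⬝ᵥ θ + (y - Aᵀ *ᵥ θ) ⬝ᵥ (P *ᵥ (y - Aᵀ *ᵥ θ)) ≤ Γ ^ 2 ∧ v = q ⬝ᵥ θ}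
      (q ⬝ᵥ θμ + Real.sqrt (Γ ^ 2 - y ⬝ᵥ (Khat⁻¹ *ᵥ y)) * Real.sqrt (q ⬝ᵥ (S⁻¹ *ᵥ q)))
    ∧
    (let θstar := θμ + (Real.sqrt (Γ ^ 2 - y ⬝ᵥ (Khat⁻¹ *ᵥ y))
        / Real.sqrt (q ⬝ᵥ (S⁻¹ *ᵥ q))) • (S⁻¹ *ᵥ q);
      θstar ⬝ᵥ θstar + (y - Aᵀ *ᵥ θstar) ⬝ᵥ (P *ᵥ (y - Aᵀ *ᵥ θstar)) ≤ Γ ^ 2 ∧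
      q ⬝ᵥ θstar
        = q ⬝ᵥ θμ + Real.sqrt (Γ ^ 2 - y ⬝ᵥ (Khat⁻¹ *ᵥ y)) * Real.sqrt (q ⬝ᵥ (S⁻¹ *ᵥ q))) :=
  relaxed_problem_closed_form_general r N P hP A y q Γ Khat hKhat θμ hθμ S hS hΓy
end

section
/- Regularized least-squares characterization of the posterior mean: let P ∈ ℝ^{N×N} be positive definite, A ∈ ℝ^{r×N}, y ∈ ℝ^N, and set K̂ := AᵀA + P⁻¹ and θ^μ := A K̂⁻¹ y. Then yᵀ K̂⁻¹ y is the least value (IsLeast, minimum attained) of the function θ ↦ ‖θ‖² + (y − Aᵀθ)ᵀ P (y − Aᵀθ) over θ ∈ ℝ^r, and θ^μ is its unique minimizer. -/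
/-!
With `c := K̂⁻¹ y` and `θ^μ = A c`, the equation `K̂ c = y` says that the residual at
`θ = θ^μ + δ` is `y - Aᵀθ = P⁻¹c - Aᵀδ`. Expanding the objective, the cross terms
`2 δ ⬝ᵥ A c` cancel and the constant terms add up to `c ⬝ᵥ K̂ c = y ⬝ᵥ K̂⁻¹ y`, so the
objective equals `y ⬝ᵥ K̂⁻¹ y + δ ⬝ᵥ δ + (Aᵀδ) ⬝ᵥ P (Aᵀδ)`, whose excess vanishes only at `δ = 0`.
-/

open Matrix

section

variable {m n R : Type*} [Fintype m] [Fintype n] [CommRing R]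

theorem Matrix.IsSymm.dotProduct_mulVec_comm_s12 {P : Matrix n n R} (hP : P.IsSymm) (a b : n → R) :
    a ⬝ᵥ (P *ᵥ b) = b ⬝ᵥ (P *ᵥ a) := by
  simpa only [hP.eq] using dotProduct_transpose_mulVec P a b

theorem Matrix.IsSymm.dotProduct_mulVec_sub {P : Matrix n n R} (hP : P.IsSymm) (a b : n → R) :
    (a - b) ⬝ᵥ (P *ᵥ (a - b)) = a ⬝ᵥ (P *ᵥ a) - 2 * (b ⬝ᵥ (P *ᵥ a)) + b ⬝ᵥ (P *ᵥ b) := by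
  simp only [mulVec_sub, dotProduct_sub, sub_dotProduct, hP.dotProduct_mulVec_comm_s12 a b]
  ring

theorem regularizedLeastSquares_complete_square [DecidableEq n] {P : Matrix n n R}
    (hP : P.IsSymm) (hPdet : IsUnit P.det) (A : Matrix m n R) {y c : n → R}
    (hc : (Aᵀ * A + P⁻¹) *ᵥ c = y) (θ : m → R) :
    θ ⬝ᵥ θ + (y - Aᵀ *ᵥ θ) ⬝ᵥ (P *ᵥ (y - Aᵀ *ᵥ θ)) =
      y ⬝ᵥ c + ((θ - A *ᵥ c) ⬝ᵥ (θ - A *ᵥ c)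
        + (Aᵀ *ᵥ (θ - A *ᵥ c)) ⬝ᵥ (P *ᵥ (Aᵀ *ᵥ (θ - A *ᵥ c)))) := by
  set δ := θ - A *ᵥ c
  have hθ : θ = A *ᵥ c + δ := (add_sub_cancel _ _).symm
  have hres : y - Aᵀ *ᵥ θ = P⁻¹ *ᵥ c - Aᵀ *ᵥ δ := by
    rw [← hc, hθ, mulVec_add, add_mulVec, mulVec_mulVec]
    abel
  have hPPinv : P *ᵥ (P⁻¹ *ᵥ c) = c := by
    rw [mulVec_mulVec, mul_nonsing_inv P hPdet, one_mulVec]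
  have hadj : ∀ a b, (Aᵀ *ᵥ a) ⬝ᵥ b = a ⬝ᵥ (A *ᵥ b) := fun a b => by
    rw [dotProduct_comm, dotProduct_transpose_mulVec]
  have hyc : y ⬝ᵥ c = (A *ᵥ c) ⬝ᵥ (A *ᵥ c) + (P⁻¹ *ᵥ c) ⬝ᵥ c := by
    rw [← hc, add_mulVec, add_dotProduct, ← mulVec_mulVec, hadj]
  rw [hres, hP.dotProduct_mulVec_sub, hPPinv, hadj, hyc, hθ]
  simp only [add_dotProduct, dotProduct_add, dotProduct_comm δ]
  ring

end

section

variable {m n : Type*} [Fintype m] [Fintype n] {P : Matrix n n ℝ}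

theorem Matrix.PosSemidef.dotProduct_self_add_nonneg (hP : P.PosSemidef) (B : Matrix n m ℝ)
    (δ : m → ℝ) : 0 ≤ δ ⬝ᵥ δ + (B *ᵥ δ) ⬝ᵥ (P *ᵥ (B *ᵥ δ)) :=
  add_nonneg (by simpa using dotProduct_self_star_nonneg δ)
    (by simpa using hP.dotProduct_mulVec_nonneg (B *ᵥ δ))

theorem Matrix.PosSemidef.dotProduct_self_add_eq_zero_iff (hP : P.PosSemidef)
    (B : Matrix n m ℝ) (δ : m → ℝ) : δ ⬝ᵥ δ + (B *ᵥ δ) ⬝ᵥ (P *ᵥ (B *ᵥ δ)) = 0 ↔ δ = 0 := by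
  refine ⟨fun h => ?_, fun h => by simp [h]⟩
  have hform : 0 ≤ (B *ᵥ δ) ⬝ᵥ (P *ᵥ (B *ᵥ δ)) := by
    simpa using hP.dotProduct_mulVec_nonneg (B *ᵥ δ)
  have hself : 0 ≤ δ ⬝ᵥ δ := by simpa using dotProduct_self_star_nonneg δ
  exact dotProduct_self_eq_zero.mp ((add_eq_zero_iff_of_nonneg hself hform).mp h).1

end

/-- Regularized least-squares characterization of the posterior mean: `yᵀK̂⁻¹y` is the
minimum (least, attained) of `θ ↦ ‖θ‖² + (y − Aᵀθ)ᵀ P (y − Aᵀθ)`, and `θ^μ = A K̂⁻¹ y` is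
its unique minimizer. -/
theorem posterior_mean_least_squares
    (r N : ℕ)
    (P : Matrix (Fin N) (Fin N) ℝ) (hP : P.PosDef)
    (A : Matrix (Fin r) (Fin N) ℝ) (y : Fin N → ℝ)
    (Khat : Matrix (Fin N) (Fin N) ℝ) (hKhat : Khat = Aᵀ * A + P⁻¹)
    (θμ : Fin r → ℝ) (hθμ : θμ = A *ᵥ (Khat⁻¹ *ᵥ y)) :
    IsLeast
      {v : ℝ | ∃ θ : Fin r → ℝ,
        v = θ ⬝ᵥ θ + (y - Aᵀ *ᵥ θ) ⬝ᵥ (P *ᵥ (y - Aᵀ *ᵥ θ))}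
      (y ⬝ᵥ (Khat⁻¹ *ᵥ y))
    ∧ θμ ⬝ᵥ θμ + (y - Aᵀ *ᵥ θμ) ⬝ᵥ (P *ᵥ (y - Aᵀ *ᵥ θμ)) = y ⬝ᵥ (Khat⁻¹ *ᵥ y)
    ∧ ∀ θ : Fin r → ℝ,
        θ ⬝ᵥ θ + (y - Aᵀ *ᵥ θ) ⬝ᵥ (P *ᵥ (y - Aᵀ *ᵥ θ)) = y ⬝ᵥ (Khat⁻¹ *ᵥ y) → θ = θμ := by
  have hK : Khat.PosDef := by
    rw [hKhat, ← conjTranspose_eq_transpose_of_trivial]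
    exact .posSemidef_add (posSemidef_conjTranspose_mul_self A) hP.inv
  have hc : (Aᵀ * A + P⁻¹) *ᵥ (Khat⁻¹ *ᵥ y) = y := by
    rw [← hKhat, mulVec_mulVec, mul_nonsing_inv _ ((isUnit_iff_isUnit_det _).mp hK.isUnit),
      one_mulVec]
  have hsq := regularizedLeastSquares_complete_square
    (isHermitian_iff_isSymm.mp hP.isHermitian) ((isUnit_iff_isUnit_det _).mp hP.isUnit) A hc
  simp only [← hθμ] at hsq
  have hmin : θμ ⬝ᵥ θμ + (y - Aᵀ *ᵥ θμ) ⬝ᵥ (P *ᵥ (y - Aᵀ *ᵥ θμ)) = y ⬝ᵥ (Khat⁻¹ *ᵥ y) := by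
    rw [hsq, sub_self, (hP.posSemidef.dotProduct_self_add_eq_zero_iff Aᵀ 0).mpr rfl, add_zero]
  refine ⟨⟨⟨θμ, hmin.symm⟩, ?_⟩, hmin, fun θ hθ => ?_⟩
  · rintro v ⟨θ, rfl⟩
    exact hsq θ ▸ le_add_of_nonneg_right (hP.posSemidef.dotProduct_self_add_nonneg Aᵀ _)
  · rw [hsq, add_eq_left, hP.posSemidef.dotProduct_self_add_eq_zero_iff] at hθ
    exact sub_eq_zero.mp hθ
end

section
/- Convergence to the prior bound as the noise parameter grows: in the single-constraint case (n_con = 1, P ∈ ℝ^{N×N} positive definite), the dual bound F(σ) := qᵀθ^μ_σ + β_σ · √(qᵀ S_σ⁻¹ q) — where P_σ = σ⁻² P, K̂_σ = AᵀA + σ² P⁻¹, θ^μ_σ = A K̂_σ⁻¹ y, S_σ = I_r + σ⁻² A P Aᵀ, and β_σ = √(Γ_f² + Γ_w²/σ² − yᵀ K̂_σ⁻¹ y) — tends to the prior bound Γ_f · ‖q‖ as σ → ∞. -/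
open Matrix Filter

/-- The GP-type dual bound in the single-constraint case, as a function of the scalar noise
parameter `σ`: `F(σ) = qᵀθ^μ_σ + β_σ √(qᵀ S_σ⁻¹ q)` with `P_σ = σ⁻² P`,
`K̂_σ = AᵀA + P_σ⁻¹`, `θ^μ_σ = A K̂_σ⁻¹ y`, `S_σ = I + A P_σ Aᵀ`,
`β_σ = √(Γ_f² + Γ_w²/σ² − yᵀ K̂_σ⁻¹ y)`. -/
noncomputable def dualF1 {r N : ℕ} (A : Matrix (Fin r) (Fin N) ℝ) (y : Fin N → ℝ)
    (q : Fin r → ℝ) (Γf Γw : ℝ) (P : Matrix (Fin N) (Fin N) ℝ) (σ : ℝ) : ℝ :=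
  q ⬝ᵥ (A *ᵥ ((Aᵀ * A + ((σ ^ 2)⁻¹ • P)⁻¹)⁻¹ *ᵥ y))
    + Real.sqrt (Γf ^ 2 + Γw ^ 2 / σ ^ 2
        - y ⬝ᵥ ((Aᵀ * A + ((σ ^ 2)⁻¹ • P)⁻¹)⁻¹ *ᵥ y))
      * Real.sqrt (q ⬝ᵥ ((1 + A * ((σ ^ 2)⁻¹ • P) * Aᵀ)⁻¹ *ᵥ q))

/-!
Put `t = σ⁻²`. Factoring `t` out of `K̂_σ = AᵀA + t⁻¹ P⁻¹` gives `K̂_σ⁻¹ = t (t AᵀA + P⁻¹)⁻¹`,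
and `t ↦ (t AᵀA + P⁻¹)⁻¹` is continuous at `t = 0` because `P⁻¹` is invertible; hence
`K̂_σ⁻¹ → 0`. Likewise `S_σ⁻¹ = (1 + t APAᵀ)⁻¹ → 1`. So `θ^μ_σ → 0`, `β_σ → √(Γ_f²) = Γ_f` and
`qᵀS_σ⁻¹q → qᵀq`, and `F(σ)` is a continuous expression in `(K̂_σ⁻¹, S_σ⁻¹, t)`.
-/

open Topology

namespace Matrix

variable {n 𝕜 : Type*} [Fintype n] [DecidableEq n] [Field 𝕜]

theorem inv_smul_of_ne_zero {k : 𝕜} (hk : k ≠ 0) (A : Matrix n n 𝕜) :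
    (k • A)⁻¹ = k⁻¹ • A⁻¹ := by
  by_cases hA : IsUnit A.det
  · exact inv_eq_left_inv <| by
      rw [smul_mul_smul_comm, inv_mul_cancel₀ hk, nonsing_inv_mul _ hA, one_smul]
  · have hkA : ¬IsUnit (k • A).det := by simpa [det_smul, hk] using hA
    rw [nonsing_inv_apply_not_isUnit _ hA, nonsing_inv_apply_not_isUnit _ hkA, smul_zero]

theorem inv_add_inv_smul {t : 𝕜} (ht : t ≠ 0) (B P : Matrix n n 𝕜) :
    (B + (t • P)⁻¹)⁻¹ = t • (t • B + P⁻¹)⁻¹ := by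
  have hsum : B + t⁻¹ • P⁻¹ = t⁻¹ • (t • B + P⁻¹) := by
    rw [smul_add, smul_smul, inv_mul_cancel₀ ht, one_smul]
  rw [inv_smul_of_ne_zero ht, hsum, inv_smul_of_ne_zero (inv_ne_zero ht), inv_inv]

variable [TopologicalSpace 𝕜] [IsTopologicalDivisionRing 𝕜]

theorem continuousAt_inv_of_isUnit_det {A : Matrix n n 𝕜} (hA : IsUnit A.det) :
    ContinuousAt Inv.inv A :=
  continuousAt_matrix_inv A (by rw [Ring.inverse_eq_inv']; exact continuousAt_inv₀ hA.ne_zero)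

theorem tendsto_inv_add_inv_smul_nhdsNE_zero (B : Matrix n n 𝕜) {P : Matrix n n 𝕜}
    (hP : IsUnit P.det) :
    Tendsto (fun t : 𝕜 => (B + (t • P)⁻¹)⁻¹) (𝓝[≠] 0) (𝓝 0) := by
  have hcont : ContinuousAt (fun t : 𝕜 => t • (t • B + P⁻¹)⁻¹) 0 := by
    refine continuousAt_id.smul (.comp (f := fun t : 𝕜 => t • B + P⁻¹) ?_ (by fun_prop))
    simpa using continuousAt_inv_of_isUnit_det (isUnit_nonsing_inv_det P hP)
  have hlim : Tendsto (fun t : 𝕜 => t • (t • B + P⁻¹)⁻¹) (𝓝[≠] 0) (𝓝 0) := by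
    simpa using hcont.tendsto.mono_left nhdsWithin_le_nhds
  refine hlim.congr' ?_
  filter_upwards [self_mem_nhdsWithin] with t ht
  exact (inv_add_inv_smul ht B P).symm

theorem tendsto_inv_one_add_smul_nhds_zero (M : Matrix n n 𝕜) :
    Tendsto (fun t : 𝕜 => (1 + t • M)⁻¹) (𝓝 0) (𝓝 1) := by
  have hcont : ContinuousAt (fun t : 𝕜 => (1 + t • M)⁻¹) 0 := by
    refine .comp (f := fun t : 𝕜 => 1 + t • M) ?_ (by fun_prop)
    simpa using continuousAt_inv_of_isUnit_det (A := (1 : Matrix n n 𝕜)) (by simp)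
  simpa using hcont.tendsto

end Matrix

theorem tendsto_inv_sq_atTop_nhdsNE_zero {𝕜 : Type*} [Semifield 𝕜] [LinearOrder 𝕜]
    [IsStrictOrderedRing 𝕜] [TopologicalSpace 𝕜] [OrderTopology 𝕜] :
    Tendsto (fun σ : 𝕜 => (σ ^ 2)⁻¹) atTop (𝓝[≠] 0) :=
  (tendsto_inv_atTop_nhdsGT_zero.comp (tendsto_pow_atTop two_ne_zero)).mono_right
    (nhdsWithin_mono _ fun _ hx => ne_of_gt hx)

theorem dual_bound_tendsto_prior_general
    (r N : ℕ)
    (A : Matrix (Fin r) (Fin N) ℝ) (y : Fin N → ℝ) (q : Fin r → ℝ)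
    (Γf : ℝ) (hΓf : 0 < Γf) (Γw : ℝ)
    (P : Matrix (Fin N) (Fin N) ℝ) (hP : P.PosDef) :
    Tendsto (dualF1 A y q Γf Γw P) atTop
      (nhds (Γf * Real.sqrt (q ⬝ᵥ q))) := by
  have htNE : Tendsto (fun σ : ℝ => (σ ^ 2)⁻¹) atTop (𝓝[≠] 0) := tendsto_inv_sq_atTop_nhdsNE_zero
  have ht := htNE.mono_right nhdsWithin_le_nhds
  have hK : Tendsto (fun σ : ℝ => (Aᵀ * A + ((σ ^ 2)⁻¹ • P)⁻¹)⁻¹) atTop (𝓝 0) :=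
    (tendsto_inv_add_inv_smul_nhdsNE_zero _ hP.det_pos.ne'.isUnit).comp htNE
  have hS : Tendsto (fun σ : ℝ => (1 + A * ((σ ^ 2)⁻¹ • P) * Aᵀ)⁻¹) atTop (𝓝 1) := by
    simpa only [Matrix.mul_smul, Matrix.smul_mul, Function.comp_def] using
      (tendsto_inv_one_add_smul_nhds_zero (A * P * Aᵀ)).comp ht
  let G : Matrix (Fin N) (Fin N) ℝ × Matrix (Fin r) (Fin r) ℝ × ℝ → ℝ := fun p =>
    q ⬝ᵥ (A *ᵥ (p.1 *ᵥ y))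
      + √(Γf ^ 2 + Γw ^ 2 * p.2.2 - y ⬝ᵥ (p.1 *ᵥ y)) * √(q ⬝ᵥ (p.2.1 *ᵥ q))
  have hG : Continuous G := by fun_prop
  have hG₀ : G (0, 1, 0) = Γf * √(q ⬝ᵥ q) := by simp [G, Real.sqrt_sq hΓf.le]
  rw [← hG₀]
  exact ((hG.tendsto _).comp (hK.prodMk_nhds (hS.prodMk_nhds ht))).congr
    fun σ => by simp [G, dualF1, div_eq_mul_inv]

/-- Convergence to the prior bound: as `σ → ∞`, the dual bound `F(σ)` tends to
`Γ_f ‖q‖ = Γ_f √(qᵀq)`. -/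
theorem dual_bound_tendsto_prior
    (r N : ℕ)
    (A : Matrix (Fin r) (Fin N) ℝ) (y : Fin N → ℝ) (q : Fin r → ℝ)
    (Γf : ℝ) (hΓf : 0 < Γf) (Γw : ℝ) (hΓw : 0 < Γw)
    (P : Matrix (Fin N) (Fin N) ℝ) (hP : P.PosDef) :
    Tendsto (dualF1 A y q Γf Γw P) atTop
      (nhds (Γf * Real.sqrt (q ⬝ᵥ q))) :=
  dual_bound_tendsto_prior_general r N A y q Γf hΓf Γw P hP
end
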